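/- Let H be a complex Hilbert space with fundamental symmetry Θ and Krein inner product B(x, y) := ⟪x, Θ y⟫. Let u : H → H be a conjugate linear map which is involutive (u ∘ u = id) and satisfies Re B(u x, u y) = −Re B(x, y) for all x, y, as well as u ∘ Θ = −Θ ∘ u. Let W := {v ∈ H : u v = v}. Then: (1) i•W is a real hypermaximal neutral subspace, i.e. i•W = {v ∈ H : Re B(v, w) = 0 for all w ∈ i•W}; and (2) W and i•W are mutual symplectic complements with respect to the symplectic form ω := Im B, i.e. {v ∈ H : Im B(v, w) = 0 for all w ∈ W} = i•W and {v ∈ H : Im B(v, w) = 0 for all w ∈ i•W} = W. -/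
import Mathlib


open scoped ComplexInnerProductSpace Pointwise

/-- For a complex Krein space `H` with a compatible real hypermaximal
neutral subspace `W = Fix u`: (1) `i•W` is also a real hypermaximal neutral subspace, and
(2) `W` and `i•W` are mutual symplectic complements for the symplectic form `ω = Im B`. -/
theorem stmt_5 {H : Type*} [NormedAddCommGroup H] [InnerProductSpace ℂ H] [CompleteSpace H]
    (Θ : H →L[ℂ] H) (hΘ2 : ∀ x, Θ (Θ x) = x)
    (hΘsym : ∀ x y : H, ⟪Θ x, y⟫ = ⟪x, Θ y⟫)
    (u : H →ₗ[ℝ] H)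
    (huc : ∀ (c : ℂ) (x : H), u (c • x) = (starRingEnd ℂ c) • u x)
    (hu2 : ∀ x, u (u x) = x)
    (huB : ∀ x y : H, (⟪u x, Θ (u y)⟫).re = -(⟪x, Θ y⟫).re)
    (huΘ : ∀ x, u (Θ x) = -Θ (u x)) :
    (Complex.I • {v : H | u v = v} =
      {v : H | ∀ w ∈ Complex.I • {v : H | u v = v}, (⟪v, Θ w⟫).re = 0}) ∧
    ({v : H | ∀ w ∈ {v : H | u v = v}, (⟪v, Θ w⟫).im = 0} =
      Complex.I • {v : H | u v = v}) ∧
    ({v : H | ∀ w ∈ Complex.I • {v : H | u v = v}, (⟪v, Θ w⟫).im = 0} =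
      {v : H | u v = v}) := by
  -- basic sesquilinearity facts for B x y = ⟪x, Θ y⟫
  have hBaddr : ∀ x y z : H, (⟪x, Θ (y + z)⟫ : ℂ) = ⟪x, Θ y⟫ + ⟪x, Θ z⟫ := by
    intro x y z; rw [map_add, inner_add_right]
  have hBIr : ∀ x y : H, (⟪x, Θ (Complex.I • y)⟫ : ℂ) = Complex.I * ⟪x, Θ y⟫ := by
    intro x y; rw [map_smul, inner_smul_right]
  have hBIl : ∀ x y : H, (⟪Complex.I • x, Θ y⟫ : ℂ) = -Complex.I * ⟪x, Θ y⟫ := by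
    intro x y; rw [inner_smul_left, Complex.conj_I]
  -- fixed vectors are g-neutral
  have hW0 : ∀ a b : H, u a = a → u b = b → (⟪a, Θ b⟫ : ℂ).re = 0 := by
    intro a b ha hb
    have := huB a b; rw [ha, hb] at this; linarith
  -- decomposition of any vector as a + I • b with a, b fixed
  have hdecomp : ∀ v : H, ∃ a b : H, u a = a ∧ u b = b ∧ v = a + Complex.I • b := by
    intro v
    refine ⟨((1:ℂ)/2) • (v + u v), (Complex.I/2) • (u v - v), ?_, ?_, ?_⟩
    · rw [huc]
      have h1 : u (v + u v) = v + u v := by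
        rw [map_add, hu2]; abel
      have h2 : (starRingEnd ℂ) ((1:ℂ)/2) = (1:ℂ)/2 := by
        rw [map_div₀, map_one, Complex.conj_ofNat]
      rw [h1, h2]
    · rw [huc]
      have h1 : u (u v - v) = -(u v - v) := by
        rw [map_sub, hu2]; abel
      have h2 : (starRingEnd ℂ) (Complex.I / 2) = -(Complex.I/2) := by
        rw [map_div₀, Complex.conj_I, Complex.conj_ofNat, neg_div]
      rw [h1, h2, smul_neg, neg_smul, neg_neg]
    · rw [smul_smul]
      have h1 : Complex.I * (Complex.I / 2) = -(1/2 : ℂ) := by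
        rw [mul_div_assoc', Complex.I_mul_I]; norm_num
      rw [h1]
      module
  -- key nondegeneracy: a fixed vector ω-orthogonal to all fixed vectors is 0
  have hkey : ∀ a : H, u a = a → (∀ b : H, u b = b → (⟪a, Θ b⟫ : ℂ).im = 0) → a = 0 := by
    intro a ha him
    obtain ⟨p, q, hp, hq, hpq⟩ := hdecomp (Θ a)
    have hBp : (⟪a, Θ p⟫ : ℂ) = 0 := Complex.ext (hW0 a p ha hp) (him p hp)
    have hBq : (⟪a, Θ q⟫ : ℂ) = 0 := Complex.ext (hW0 a q ha hq) (him q hq)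
    have : (⟪a, a⟫ : ℂ) = 0 := by
      have := hΘ2 a
      calc (⟪a, a⟫ : ℂ) = ⟪a, Θ (Θ a)⟫ := by rw [hΘ2]
        _ = ⟪a, Θ (p + Complex.I • q)⟫ := by rw [← hpq]
        _ = ⟪a, Θ p⟫ + Complex.I * ⟪a, Θ q⟫ := by rw [hBaddr, hBIr]
        _ = 0 := by rw [hBp, hBq]; ring
    exact inner_self_eq_zero.mp this
  refine ⟨?_, ?_, ?_⟩
  · -- i•W hypermaximal neutral
    ext v
    simp only [Set.mem_setOf_eq]
    constructor
    · rintro ⟨a, ha, rfl⟩ w ⟨b, hb, rfl⟩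
      have : (⟪Complex.I • a, Θ (Complex.I • b)⟫ : ℂ) = ⟪a, Θ b⟫ := by
        rw [hBIr, hBIl]
        linear_combination (-(⟪a, Θ b⟫ : ℂ)) * Complex.I_mul_I
      rw [this]; exact hW0 a b ha hb
    · intro hv
      obtain ⟨a, c, ha, hc, rfl⟩ := hdecomp v
      have ha0 : a = 0 := by
        refine hkey a ha fun b hb => ?_
        have h1 := hv (Complex.I • b) ⟨b, hb, rfl⟩
        have h2 : (⟪a + Complex.I • c, Θ (Complex.I • b)⟫ : ℂ)
            = Complex.I * ⟪a, Θ b⟫ + ⟪c, Θ b⟫ := by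
          rw [inner_add_left, hBIr, hBIl, hBIr]
          linear_combination (-(⟪c, Θ b⟫ : ℂ)) * Complex.I_mul_I
        rw [h2] at h1
        simp only [Complex.add_re, Complex.mul_re, Complex.I_re, Complex.I_im] at h1
        have := hW0 c b hc hb
        simp only [this] at h1; linarith
      exact ⟨c, hc, by rw [ha0, zero_add]⟩
  · -- ω-complement of W is i•W
    ext v
    simp only [Set.mem_setOf_eq]
    constructor
    · intro hv
      obtain ⟨a, c, ha, hc, rfl⟩ := hdecomp v
      have ha0 : a = 0 := by
        refine hkey a ha fun b hb => ?_
        have h1 := hv b hb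
        have h2 : (⟪a + Complex.I • c, Θ b⟫ : ℂ) = ⟪a, Θ b⟫ + -Complex.I * ⟪c, Θ b⟫ := by
          rw [inner_add_left, hBIl]
        rw [h2] at h1
        simp only [Complex.add_im, Complex.mul_im, Complex.neg_re, Complex.neg_im,
          Complex.I_re, Complex.I_im] at h1
        have := hW0 c b hc hb
        simp only [this] at h1; linarith
      exact ⟨c, hc, by rw [ha0, zero_add]⟩
    · rintro ⟨a, ha, rfl⟩ b hb
      rw [hBIl]
      simp only [Complex.mul_im, Complex.neg_re, Complex.neg_im, Complex.I_re, Complex.I_im]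
      have := hW0 a b ha hb
      simp [this]
  · -- ω-complement of i•W is W
    ext v
    simp only [Set.mem_setOf_eq]
    constructor
    · intro hv
      obtain ⟨a, c, ha, hc, rfl⟩ := hdecomp v
      have hc0 : c = 0 := by
        refine hkey c hc fun b hb => ?_
        have h1 := hv (Complex.I • b) ⟨b, hb, rfl⟩
        have h2 : (⟪a + Complex.I • c, Θ (Complex.I • b)⟫ : ℂ)
            = Complex.I * ⟪a, Θ b⟫ + ⟪c, Θ b⟫ := by
          rw [inner_add_left, hBIr, hBIl, hBIr]
          linear_combination (-(⟪c, Θ b⟫ : ℂ)) * Complex.I_mul_I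
        rw [h2] at h1
        simp only [Complex.add_im, Complex.mul_im, Complex.I_re, Complex.I_im] at h1
        have := hW0 a b ha hb
        simp only [this] at h1; linarith
      rw [hc0, smul_zero, add_zero]; exact ha
    · intro hv w
      rintro ⟨b, hb, rfl⟩
      rw [hBIr]
      simp only [Complex.mul_im, Complex.I_re, Complex.I_im]
      have := hW0 v b hv hb
      simp [this]
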